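/- In the random process associated with countNFAcore*, for every state q, realizable history h, admissible t, copy index r, and distinct words w, w' ∈ L(q), letting t* = h(lcps(run(w,q), run(w',q))) be the history value of the last common prefix state of the two derivation runs, we have Pr[w ∈ Y^r_{h,t}(q) and w' ∈ Y^r_{h,t}(q)] ≤ t² / t*. Moreover, with ρ_h(q) = min over predecessors q' of q of h(q'), we have Pr[w ∈ Z^r_h(q) and w' ∈ Z^r_h(q)] ≤ ρ_h(q)² / t*. -/

import Mathlib

/-
Both events are intersections of threshold events `U i ≤ cᵢ` for independent uniform coins
attached to the levels of a derivation run, and along a run the thresholds telescope: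
`Pr[w ∈ Y_{h,t}(q)] = t` and `Pr[w ∈ Z_h(q)] = ρ_h(q)`. The runs of `w` and `w'` share exactly the
coins of the levels up to that of their last common prefix state `s`: a derivation run is
determined backwards by its state at a level together with the prefix read so far, so a common coin
at a higher level would extend the common prefix. The shared thresholds multiply to `h(s)`, hence
by independence `Pr[both] = Pr[w] · Pr[w'] / h(s)`.
-/


/-- A nondeterministic finite automaton over the alphabet `{0,1}` (`Bool`), with a single
initial state, a transition relation, and (via `LinearOrder σ`) a total order `≺` on states. -/
structure UNFA (σ : Type*) where
  qI : σ
  trans : σ → Bool → σ → Prop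

/-- `A.Accepts w q` : there is a run of the word `w` from the initial state ending at `q`.
`L(q) = {w | A.Accepts w q}`. -/
inductive UNFA.Accepts {σ : Type*} (A : UNFA σ) : List Bool → σ → Prop
  | nil : A.Accepts [] A.qI
  | snoc {w : List Bool} {b : Bool} {q' q : σ} :
      A.Accepts w q' → A.trans q' b q → A.Accepts (w ++ [b]) q

/-- The `≺`-first `b`-predecessor of `q` whose language contains `w`
(junk value `qI` if there is none). -/
noncomputable def UNFA.firstPred {σ : Type*} [Fintype σ] [LinearOrder σ]
    (A : UNFA σ) (q : σ) (b : Bool) (w : List Bool) : σ := by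
  classical
  exact if h : (Finset.univ.filter fun q' => A.trans q' b q ∧ A.Accepts w q').Nonempty
    then (Finset.univ.filter fun q' => A.trans q' b q ∧ A.Accepts w q').min' h
    else A.qI

/-- Derivation run computed on the reversed word, listed from `q` back to the initial
state. -/
noncomputable def UNFA.derivRunRev {σ : Type*} [Fintype σ] [LinearOrder σ]
    (A : UNFA σ) : List Bool → σ → List σ
  | [], q => [q]
  | b :: rest, q => q :: A.derivRunRev rest (A.firstPred q b rest.reverse)

/-- The derivation run `run(w,q)` of `w ∈ L(q)`, as the list of its states from the
initial state (index 0) to `q` (index `w.length`). -/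
noncomputable def UNFA.derivRun {σ : Type*} [Fintype σ] [LinearOrder σ]
    (A : UNFA σ) (w : List Bool) (q : σ) : List σ :=
  (A.derivRunRev w.reverse q).reverse

/-- The index `ℓ` of the last common prefix state of two runs `R, R'` (state lists) with
label words `w, w'`: the largest `k ≤ |w|` such that the runs agree on their first `k+1`
states and the words agree on their first `k` symbols. -/
def lcpsLevel {σ : Type*} [DecidableEq σ] (R R' : List σ) (w w' : List Bool) : ℕ :=
  Nat.findGreatest
    (fun k => R.take (k+1) = R'.take (k+1) ∧ w.take k = w'.take k) w.length


/-- `ρ_h(q) = min(h(q₁),...,h(q_k))` over the predecessors of `q`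
(junk value `1` if `q` has no predecessor). -/
noncomputable def UNFA.rhoH {σ : Type*} [Fintype σ] [LinearOrder σ]
    (A : UNFA σ) (h : σ → ℚ) (q : σ) : ℚ := by
  classical
  exact if hne : ((Finset.univ.filter fun q' => ∃ b, A.trans q' b q).image h).Nonempty
    then ((Finset.univ.filter fun q' => ∃ b, A.trans q' b q).image h).min' hne
    else 1

/-- Membership event `w.reverse ∈ Y^r_{h,t}(q)` of the random process, driven by the
independent uniform coins `U (q, w, c)` (`c = false` for the coin of the `reduce` inside
`Z`, `c = true` for the final `reduce` giving `Y`).  Defined by recursion on the reversed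
word. -/
noncomputable def UNFA.memYrev {σ Ω : Type*} [Fintype σ] [LinearOrder σ]
    (A : UNFA σ) (U : σ × List Bool × Bool → Ω → ℝ) (h : σ → ℚ) :
    List Bool → σ → ℚ → Ω → Prop
  | [], q, _t, _ω => q = A.qI
  | b :: rest, q, t, ω =>
      A.memYrev U h rest (A.firstPred q b rest.reverse) (h (A.firstPred q b rest.reverse)) ω ∧
      A.Accepts (b :: rest).reverse q ∧
      U (q, (b :: rest).reverse, false) ω ≤
        ((A.rhoH h q : ℝ) / ((h (A.firstPred q b rest.reverse) : ℝ))) ∧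
      U (q, (b :: rest).reverse, true) ω ≤ ((t : ℝ) / (A.rhoH h q : ℝ))

/-- Membership event `w.reverse ∈ Z^r_h(q)` of the random process. -/
noncomputable def UNFA.memZrev {σ Ω : Type*} [Fintype σ] [LinearOrder σ]
    (A : UNFA σ) (U : σ × List Bool × Bool → Ω → ℝ) (h : σ → ℚ) :
    List Bool → σ → Ω → Prop
  | [], _q, _ω => False
  | b :: rest, q, ω =>
      A.memYrev U h rest (A.firstPred q b rest.reverse) (h (A.firstPred q b rest.reverse)) ω ∧
      A.Accepts (b :: rest).reverse q ∧
      U (q, (b :: rest).reverse, false) ω ≤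
        ((A.rhoH h q : ℝ) / ((h (A.firstPred q b rest.reverse) : ℝ)))

/-- `w ∈ Y^r_{h,t}(q)`. -/
noncomputable def UNFA.memY {σ Ω : Type*} [Fintype σ] [LinearOrder σ]
    (A : UNFA σ) (U : σ × List Bool × Bool → Ω → ℝ) (h : σ → ℚ)
    (w : List Bool) (q : σ) (t : ℚ) (ω : Ω) : Prop :=
  A.memYrev U h w.reverse q t ω

/-- `w ∈ Z^r_h(q)`. -/
noncomputable def UNFA.memZ {σ Ω : Type*} [Fintype σ] [LinearOrder σ]
    (A : UNFA σ) (U : σ × List Bool × Bool → Ω → ℝ) (h : σ → ℚ)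
    (w : List Bool) (q : σ) (ω : Ω) : Prop :=
  A.memZrev U h w.reverse q ω

open MeasureTheory ProbabilityTheory

theorem measure_forall_le_eq_prod {ι Ω : Type*} [MeasurableSpace Ω] {μ : Measure Ω}
    {U : ι → Ω → ℝ} (hindep : iIndepFun U μ)
    (hunif : ∀ i c, 0 ≤ c → c ≤ 1 → μ {ω | U i ω ≤ c} = ENNReal.ofReal c)
    {K : List (ι × ℝ)} (hnd : (K.map Prod.fst).Nodup) (hK : ∀ pc ∈ K, 0 ≤ pc.2 ∧ pc.2 ≤ 1) :
    μ {ω | ∀ pc ∈ K, U pc.1 ω ≤ pc.2} = ENNReal.ofReal (K.map Prod.snd).prod := by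
  have hinj : Function.Injective fun j : Fin K.length => K[(j : ℕ)].1 := fun j k hjk =>
    Fin.ext ((hnd.getElem_inj_iff (hi := by simp) (hj := by simp)).1 (by simpa using hjk))
  have hevent : {ω | ∀ pc ∈ K, U pc.1 ω ≤ pc.2} =
      ⋂ j : Fin K.length, U K[(j : ℕ)].1 ⁻¹' Set.Iic K[(j : ℕ)].2 := by
    ext ω
    simp [List.forall_mem_iff_getElem, Fin.forall_iff]
  have hK' (j : Fin K.length) : 0 ≤ K[(j : ℕ)].2 ∧ K[(j : ℕ)].2 ≤ 1 := hK _ (List.getElem_mem _)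
  rw [hevent, (hindep.precomp hinj).meas_iInter fun j => ⟨_, measurableSet_Iic, rfl⟩,
    ← Fin.prod_univ_fun_getElem, ENNReal.ofReal_prod_of_nonneg fun j _ => (hK' j).1]
  exact Finset.prod_congr rfl fun j _ => hunif _ _ (hK' j).1 (hK' j).2

theorem measure_inter_eq_of_drop_eq {ι Ω : Type*} [MeasurableSpace Ω] {μ : Measure Ω}
    {U : ι → Ω → ℝ} (hindep : iIndepFun U μ)
    (hunif : ∀ i c, 0 ≤ c → c ≤ 1 → μ {ω | U i ω ≤ c} = ENNReal.ofReal c)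
    {K K' : List (ι × ℝ)} {m N : ℕ} (hmN : m ≤ N) (hdrop : K.drop N = K'.drop N)
    (hnd : ((K ++ K'.take N).map Prod.fst).Nodup) (hK : ∀ pc ∈ K ++ K', 0 ≤ pc.2 ∧ pc.2 ≤ 1)
    (hC : ((K'.drop N).map Prod.snd).prod ≠ 0) :
    μ ({ω | ∀ pc ∈ K.drop m, U pc.1 ω ≤ pc.2} ∩ {ω | ∀ pc ∈ K'.drop m, U pc.1 ω ≤ pc.2}) =
      ENNReal.ofReal (((K.drop m).map Prod.snd).prod * ((K'.drop m).map Prod.snd).prod /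
        ((K'.drop N).map Prod.snd).prod) := by
  have hsplit : K'.drop m = (K'.take N).drop m ++ K'.drop N := by
    conv_lhs => rw [← List.take_append_drop (N - m) (K'.drop m)]
    rw [List.drop_drop, Nat.add_sub_cancel' hmN, List.drop_take]
  have hsub : K'.drop N ⊆ K.drop m := by
    rw [← hdrop, ← Nat.add_sub_cancel' hmN, ← List.drop_drop]
    exact (List.drop_sublist _ _).subset
  have hevent : {ω | ∀ pc ∈ K.drop m, U pc.1 ω ≤ pc.2} ∩ {ω | ∀ pc ∈ K'.drop m, U pc.1 ω ≤ pc.2}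
      = {ω | ∀ pc ∈ K.drop m ++ (K'.take N).drop m, U pc.1 ω ≤ pc.2} := by
    ext ω
    simp only [Set.mem_inter_iff, Set.mem_ofPred_eq, hsplit, List.forall_mem_append]
    exact ⟨fun ⟨hK, hK'⟩ => ⟨hK, hK'.1⟩, fun ⟨hK, hK'⟩ => ⟨hK, hK', fun pc hpc => hK pc (hsub hpc)⟩⟩
  rw [hevent, measure_forall_le_eq_prod hindep hunif
    (hnd.sublist (((List.drop_sublist _ _).append (List.drop_sublist _ _)).map _))
    fun pc hpc => hK pc (by
      rcases List.mem_append.1 hpc with hpc | hpc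
      · exact List.mem_append_left _ (List.drop_subset _ _ hpc)
      · exact List.mem_append_right _ (List.take_subset _ _ (List.drop_subset _ _ hpc)))]
  simp only [hsplit, List.map_append, List.prod_append]
  rw [← mul_assoc, mul_div_cancel_right₀ _ hC]

theorem List.getD_eq_getD_of_take_eq {α : Type*} {l l' : List α} {k : ℕ} (d : α)
    (h : l.take (k + 1) = l'.take (k + 1)) : l.getD k d = l'.getD k d := by
  simpa [List.getD_eq_getElem?_getD, List.getElem?_take] using congrArg (·.getD k d) h

section Lcps

variable {σ : Type*} [DecidableEq σ] {R R' : List σ} {w w' : List Bool}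

theorem lcpsLevel_le_length : lcpsLevel R R' w w' ≤ w.length := Nat.findGreatest_le _

theorem take_lcpsLevel (h0 : R.take 1 = R'.take 1) :
    R.take (lcpsLevel R R' w w' + 1) = R'.take (lcpsLevel R R' w w' + 1) ∧
      w.take (lcpsLevel R R' w w') = w'.take (lcpsLevel R R' w w') :=
  Nat.findGreatest_spec (P := fun k => R.take (k + 1) = R'.take (k + 1) ∧ w.take k = w'.take k)
    (Nat.zero_le _) ⟨h0, by simp⟩

theorem le_lcpsLevel {j : ℕ} (hj : j ≤ w.length) (hR : R.take (j + 1) = R'.take (j + 1))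
    (hw : w.take j = w'.take j) : j ≤ lcpsLevel R R' w w' :=
  Nat.le_findGreatest hj ⟨hR, hw⟩

theorem lcpsLevel_lt_length (h0 : R.take 1 = R'.take 1) (hlen : w'.length = w.length)
    (hne : w ≠ w') : lcpsLevel R R' w w' < w.length := by
  refine lt_of_le_of_ne lcpsLevel_le_length fun hL => hne ?_
  have hw := (take_lcpsLevel (w := w) (w' := w') h0).2
  rwa [hL, List.take_length, ← hlen, List.take_length] at hw

end Lcps

namespace UNFA

section Accepts

variable {σ : Type*} {A : UNFA σ}

theorem Accepts.eq_qI_of_nil {q : σ} (h : A.Accepts [] q) : q = A.qI := by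
  generalize hw : ([] : List Bool) = w at h
  cases h with
  | nil => rfl
  | snoc => simp at hw

theorem Accepts.exists_of_append_singleton {w : List Bool} {b : Bool} {q : σ}
    (h : A.Accepts (w ++ [b]) q) : ∃ q', A.Accepts w q' ∧ A.trans q' b q := by
  generalize hw : w ++ [b] = v at h
  cases h with
  | nil => simp at hw
  | snoc hacc htr =>
    obtain ⟨rfl, rfl⟩ := by simpa using hw
    exact ⟨_, hacc, htr⟩

theorem Accepts.level_eq_length (lvl : σ → ℕ) (hlvl0 : lvl A.qI = 0)
    (hlvlstep : ∀ q' b q, A.trans q' b q → lvl q = lvl q' + 1) {w : List Bool} {q : σ}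
    (h : A.Accepts w q) : lvl q = w.length := by
  induction h with
  | nil => exact hlvl0
  | snoc _ htr ih => simp [hlvlstep _ _ _ htr, ih]

end Accepts

section

variable {σ : Type*} [Fintype σ] [LinearOrder σ] {A : UNFA σ}

theorem firstPred_spec {u : List Bool} {b : Bool} {q : σ} (h : A.Accepts (u ++ [b]) q) :
    A.trans (A.firstPred q b u) b q ∧ A.Accepts u (A.firstPred q b u) := by
  classical
  obtain ⟨q', hacc, htr⟩ := h.exists_of_append_singleton
  have hne : (Finset.univ.filter fun p => A.trans p b q ∧ A.Accepts u p).Nonempty :=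
    ⟨q', by simp [hacc, htr]⟩
  unfold firstPred
  rw [dif_pos hne]
  exact (Finset.mem_filter.1 (Finset.min'_mem _ hne)).2

theorem rhoH_pos {h : σ → ℚ} (hpos : ∀ p, 0 < h p) (q : σ) : 0 < A.rhoH h q := by
  classical
  unfold rhoH
  split_ifs with hne
  · obtain ⟨p, -, hp⟩ := Finset.mem_image.1 (Finset.min'_mem _ hne)
    exact hp ▸ hpos p
  · exact one_pos

theorem rhoH_le_of_trans (h : σ → ℚ) {p q : σ} {b : Bool} (htr : A.trans p b q) :
    A.rhoH h q ≤ h p := by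
  classical
  have hmem : h p ∈ (Finset.univ.filter fun p' => ∃ c, A.trans p' c q).image h :=
    Finset.mem_image_of_mem h (Finset.mem_filter.2 ⟨Finset.mem_univ _, b, htr⟩)
  unfold rhoH
  rw [dif_pos ⟨_, hmem⟩]
  exact Finset.min'_le _ _ hmem

end

variable {σ : Type*} [Fintype σ] [LinearOrder σ] (A : UNFA σ)

theorem length_derivRunRev : ∀ (v : List Bool) (q : σ), (A.derivRunRev v q).length = v.length + 1
  | [], _ => rfl
  | _ :: rest, _ => by simp [derivRunRev, length_derivRunRev rest]

theorem derivRunRev_getD_zero (v : List Bool) (q : σ) : (A.derivRunRev v q).getD 0 A.qI = q := by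
  cases v <;> rfl

theorem drop_derivRunRev : ∀ (v : List Bool) (q : σ) {k : ℕ}, k ≤ v.length →
    (A.derivRunRev v q).drop k = A.derivRunRev (v.drop k) ((A.derivRunRev v q).getD k A.qI)
  | v, q, 0, _ => by rw [List.drop_zero, List.drop_zero, derivRunRev_getD_zero]
  | _ :: rest, _, k + 1, hk =>
    drop_derivRunRev rest _ (Nat.le_of_succ_le_succ hk)

theorem derivRunRev_getD_length : ∀ (v : List Bool) (q : σ), A.Accepts v.reverse q →
    (A.derivRunRev v q).getD v.length A.qI = A.qI
  | [], _, h => h.eq_qI_of_nil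
  | b :: rest, q, h =>
    derivRunRev_getD_length rest _ (firstPred_spec (b := b) (by simpa using h)).2

theorem derivRun_getD {w : List Bool} {j : ℕ} (hj : j ≤ w.length) (q : σ) :
    (A.derivRun w q).getD j A.qI = (A.derivRunRev w.reverse q).getD (w.length - j) A.qI := by
  unfold derivRun
  rw [List.getD_reverse _ (by simp [length_derivRunRev]; omega), length_derivRunRev,
    List.length_reverse, Nat.add_sub_cancel]

theorem take_derivRun {w : List Bool} {j : ℕ} (hj : j ≤ w.length) (q : σ) :
    (A.derivRun w q).take (j + 1) = A.derivRun (w.take j) ((A.derivRun w q).getD j A.qI) := by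
  rw [derivRun_getD A hj]
  unfold derivRun
  rw [List.take_reverse, length_derivRunRev, List.length_reverse, List.reverse_take,
    show w.length + 1 - (j + 1) = w.length - j by omega, drop_derivRunRev _ _ _ (by simp)]

theorem take_one_derivRun {w : List Bool} {q : σ} (hw : A.Accepts w q) :
    (A.derivRun w q).take 1 = [A.qI] := by
  rw [take_derivRun A (Nat.zero_le _), derivRun_getD A (Nat.zero_le _), Nat.sub_zero,
    ← List.length_reverse, derivRunRev_getD_length A _ _ (by simpa using hw)]
  rfl

theorem accepts_derivRunRev_getD : ∀ (v : List Bool) (q : σ), A.Accepts v.reverse q →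
    ∀ {k : ℕ}, k ≤ v.length → A.Accepts (v.drop k).reverse ((A.derivRunRev v q).getD k A.qI)
  | v, q, hacc, 0, _ => by rwa [List.drop_zero, derivRunRev_getD_zero]
  | b :: rest, q, hacc, k + 1, hk =>
    accepts_derivRunRev_getD rest _
      (firstPred_spec (b := b) (u := rest.reverse) (by simpa using hacc)).2
      (Nat.le_of_succ_le_succ hk)

theorem accepts_derivRun_getD {w : List Bool} {q : σ} (hw : A.Accepts w q) {j : ℕ}
    (hj : j ≤ w.length) : A.Accepts (w.take j) ((A.derivRun w q).getD j A.qI) := by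
  have := accepts_derivRunRev_getD A w.reverse q (by simpa using hw) (k := w.length - j)
    (by simp)
  rwa [List.drop_reverse, List.reverse_reverse, Nat.sub_sub_self hj,
    ← derivRun_getD A hj] at this

theorem derivRun_getD_ne_of_lcpsLevel_lt {w w' : List Bool} {q : σ}
    (hlen : w'.length = w.length) {j : ℕ}
    (hLj : lcpsLevel (A.derivRun w q) (A.derivRun w' q) w w' < j) (hj : j ≤ w.length)
    (hwj : w.take j = w'.take j) :
    (A.derivRun w q).getD j A.qI ≠ (A.derivRun w' q).getD j A.qI := by
  intro hR
  have hrun : (A.derivRun w q).take (j + 1) = (A.derivRun w' q).take (j + 1) := by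
    rw [take_derivRun A hj, take_derivRun A (hlen ▸ hj), hwj, hR]
  exact absurd (le_lcpsLevel hj hrun hwj) (not_le.2 hLj)

variable (h : σ → ℚ)

/-- The coins tested by `A.memYrev U h v q t` with their thresholds, from level `v.length` down
to level `1`: at the state `p` reached by the prefix `u`, the coin `(p, u, false)` drives the
`reduce` producing `Z(p)` and `(p, u, true)` the one producing `Y(p)`. -/
noncomputable def coinList : List Bool → σ → ℚ → List ((σ × List Bool × Bool) × ℝ)
  | [], _, _ => []
  | b :: rest, q, t =>
    ((q, (b :: rest).reverse, true), (t : ℝ) / A.rhoH h q) ::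
    ((q, (b :: rest).reverse, false), (A.rhoH h q : ℝ) / h (A.firstPred q b rest.reverse)) ::
    coinList rest (A.firstPred q b rest.reverse) (h (A.firstPred q b rest.reverse))

theorem memYrev_iff_coinList {Ω : Type*} (U : σ × List Bool × Bool → Ω → ℝ) (ω : Ω) :
    ∀ (v : List Bool) (q : σ) (t : ℚ), A.Accepts v.reverse q →
      (A.memYrev U h v q t ω ↔ ∀ pc ∈ A.coinList h v q t, U pc.1 ω ≤ pc.2)
  | [], q, t, hacc => by simp [memYrev, coinList, hacc.eq_qI_of_nil]
  | b :: rest, q, t, hacc => by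
    have hpred := (firstPred_spec (b := b) (u := rest.reverse) (by simpa using hacc)).2
    simp only [memYrev, coinList, memYrev_iff_coinList U ω rest _ _ hpred, List.mem_cons,
      forall_eq_or_imp]
    tauto

theorem memZrev_iff_coinList {Ω : Type*} (U : σ × List Bool × Bool → Ω → ℝ) (ω : Ω)
    {v : List Bool} {q : σ} (hacc : A.Accepts v.reverse q) (hv : v ≠ []) (t : ℚ) :
    A.memZrev U h v q ω ↔ ∀ pc ∈ (A.coinList h v q t).tail, U pc.1 ω ≤ pc.2 := by
  obtain ⟨b, rest, rfl⟩ := List.exists_cons_of_ne_nil hv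
  have hpred := (firstPred_spec (b := b) (u := rest.reverse) (by simpa using hacc)).2
  simp only [memZrev, coinList, memYrev_iff_coinList A h U ω rest _ _ hpred, List.tail_cons,
    List.mem_cons, forall_eq_or_imp]
  tauto

theorem setOf_memY_eq {Ω : Type*} (U : σ × List Bool × Bool → Ω → ℝ) {w : List Bool} {q : σ}
    (hw : A.Accepts w q) (t : ℚ) :
    {ω | A.memY U h w q t ω} = {ω | ∀ pc ∈ A.coinList h w.reverse q t, U pc.1 ω ≤ pc.2} :=
  Set.ext fun ω => memYrev_iff_coinList A h U ω _ q t (by simpa using hw)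

theorem setOf_memZ_eq {Ω : Type*} (U : σ × List Bool × Bool → Ω → ℝ) {w : List Bool} {q : σ}
    (hw : A.Accepts w q) (hw0 : w ≠ []) (t : ℚ) :
    {ω | A.memZ U h w q ω} = {ω | ∀ pc ∈ (A.coinList h w.reverse q t).tail, U pc.1 ω ≤ pc.2} :=
  Set.ext fun ω => memZrev_iff_coinList A h U ω (by simpa using hw) (by simpa using hw0) t

theorem length_coinList : ∀ (v : List Bool) (q : σ) (t : ℚ),
    (A.coinList h v q t).length = 2 * v.length
  | [], _, _ => rfl
  | _ :: rest, _, _ => by simp [coinList, length_coinList rest]; ring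

theorem mem_take_coinList : ∀ (v : List Bool) (q : σ) (t : ℚ) (i : ℕ) pc,
    pc ∈ (A.coinList h v q t).take (2 * i) → ∃ k < i, k < v.length ∧
      pc.1.1 = (A.derivRunRev v q).getD k A.qI ∧ pc.1.2.1 = (v.drop k).reverse
  | [], _, _, _, _, hpc => by simp [coinList] at hpc
  | _ :: _, _, _, 0, _, hpc => by simp at hpc
  | b :: rest, q, t, i + 1, pc, hpc => by
    rw [coinList, show 2 * (i + 1) = 2 * i + 1 + 1 by ring] at hpc
    simp only [List.take_succ_cons, List.mem_cons] at hpc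
    rcases hpc with rfl | rfl | hpc
    · exact ⟨0, by simp, by simp, rfl, rfl⟩
    · exact ⟨0, by simp, by simp, rfl, rfl⟩
    · obtain ⟨k, hki, hk, hstate, hword⟩ := mem_take_coinList rest _ _ i pc hpc
      exact ⟨k + 1, by omega, by simpa using hk, hstate, hword⟩

theorem mem_coinList {v : List Bool} {q : σ} {t : ℚ} {pc} (hpc : pc ∈ A.coinList h v q t) :
    ∃ k < v.length, pc.1.1 = (A.derivRunRev v q).getD k A.qI ∧
      pc.1.2.1 = (v.drop k).reverse := by
  rw [← List.take_of_length_le (length_coinList A h v q t).le] at hpc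
  obtain ⟨k, -, hk, hpc⟩ := mem_take_coinList A h v q t _ pc hpc
  exact ⟨k, hk, hpc⟩

theorem nodup_coinList : ∀ (v : List Bool) (q : σ) (t : ℚ),
    ((A.coinList h v q t).map Prod.fst).Nodup
  | [], _, _ => List.nodup_nil
  | b :: rest, q, t => by
    have hshort : ∀ pc ∈ A.coinList h rest (A.firstPred q b rest.reverse)
        (h (A.firstPred q b rest.reverse)), pc.1.2.1.length < (b :: rest).length := by
      intro pc hpc
      obtain ⟨k, -, -, hword⟩ := mem_coinList A h hpc
      simp [hword]
    simp only [coinList, List.map_cons, List.nodup_cons, List.mem_cons, List.mem_map,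
      not_or, not_exists, not_and]
    refine ⟨⟨by simp, fun pc hpc he => ?_⟩, fun pc hpc he => ?_, nodup_coinList rest _ _⟩ <;>
      exact absurd (hshort pc hpc) (by simp [he])

theorem coinList_bounds (hpos : ∀ p, 0 < h p)
    (hle : ∀ v p, A.Accepts v p → v ≠ [] → h p ≤ A.rhoH h p) (v : List Bool) :
    ∀ (q : σ) (t : ℚ), A.Accepts v.reverse q → 0 ≤ t → t ≤ A.rhoH h q →
      ∀ pc ∈ A.coinList h v q t, 0 ≤ pc.2 ∧ pc.2 ≤ 1 := by
  induction v with
  | nil => simp [coinList]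
  | cons b rest ih =>
    intro q t hacc ht0 htle
    obtain ⟨htr, hpred⟩ := firstPred_spec (b := b) (u := rest.reverse) (by simpa using hacc)
    have hρ : (0 : ℝ) < A.rhoH h q := by exact_mod_cast rhoH_pos hpos q
    have hρp : (A.rhoH h q : ℝ) ≤ h (A.firstPred q b rest.reverse) := by
      exact_mod_cast rhoH_le_of_trans h htr
    have hrest : ∀ pc ∈ A.coinList h rest (A.firstPred q b rest.reverse)
        (h (A.firstPred q b rest.reverse)), 0 ≤ pc.2 ∧ pc.2 ≤ 1 := by
      by_cases hne : rest = []
      · simp [hne, coinList]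
      · exact ih _ _ hpred (hpos _).le (hle _ _ hpred (by simpa using hne))
    simp only [coinList, List.mem_cons, forall_eq_or_imp]
    exact ⟨⟨div_nonneg (by exact_mod_cast ht0) hρ.le,
        div_le_one_of_le₀ (by exact_mod_cast htle) hρ.le⟩,
      ⟨div_nonneg hρ.le (hρ.le.trans hρp), div_le_one_of_le₀ hρp (hρ.le.trans hρp)⟩, hrest⟩

theorem drop_coinList : ∀ (v : List Bool) (q : σ) (t : ℚ) {i : ℕ}, 0 < i → i ≤ v.length →
    (A.coinList h v q t).drop (2 * i) =
      A.coinList h (v.drop i) ((A.derivRunRev v q).getD i A.qI)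
        (h ((A.derivRunRev v q).getD i A.qI))
  | [], _, _, _, hi0, hi => absurd (hi0.trans_le hi) (lt_irrefl 0)
  | _ :: _, _, _, 0, hi0, _ => absurd hi0 (lt_irrefl 0)
  | b :: rest, q, t, 1, _, _ => by
    simp only [coinList, derivRunRev, Nat.mul_one, List.drop_succ_cons, List.drop_zero,
      List.getD_cons_succ, derivRunRev_getD_zero]
  | b :: rest, q, t, i + 2, _, hi => by
    rw [show 2 * (i + 2) = 2 * (i + 1) + 1 + 1 by ring, coinList]
    exact drop_coinList rest _ _ (Nat.succ_pos i) (by simpa using hi)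

theorem prod_coinList (hpos : ∀ p, 0 < h p) (hI : h A.qI = 1) :
    ∀ (v : List Bool) (q : σ) (t : ℚ), A.Accepts v.reverse q → (v = [] → t = h q) →
      ((A.coinList h v q t).map Prod.snd).prod = t
  | [], q, t, hacc, ht => by simp [coinList, ht rfl, hacc.eq_qI_of_nil, hI]
  | b :: rest, q, t, hacc, _ => by
    have hpred := (firstPred_spec (b := b) (u := rest.reverse) (by simpa using hacc)).2
    have hρ : (A.rhoH h q : ℝ) ≠ 0 := by exact_mod_cast (rhoH_pos hpos q).ne'
    have hp : (h (A.firstPred q b rest.reverse) : ℝ) ≠ 0 := by exact_mod_cast (hpos _).ne'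
    simp only [coinList, List.map_cons, List.prod_cons,
      prod_coinList hpos hI rest _ _ hpred fun _ => rfl]
    field_simp

theorem prod_tail_coinList (hpos : ∀ p, 0 < h p) (hI : h A.qI = 1) {v : List Bool} {q : σ}
    (hacc : A.Accepts v.reverse q) (hv : v ≠ []) (t : ℚ) :
    ((A.coinList h v q t).tail.map Prod.snd).prod = A.rhoH h q := by
  obtain ⟨b, rest, rfl⟩ := List.exists_cons_of_ne_nil hv
  have hpred := (firstPred_spec (b := b) (u := rest.reverse) (by simpa using hacc)).2
  have hp : (h (A.firstPred q b rest.reverse) : ℝ) ≠ 0 := by exact_mod_cast (hpos _).ne'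
  simp only [coinList, List.tail_cons, List.map_cons, List.prod_cons,
    prod_coinList A h hpos hI rest _ _ hpred fun _ => rfl]
  field_simp

theorem mem_take_coinList_reverse {w : List Bool} {q : σ} {t : ℚ} {j : ℕ} {pc}
    (hpc : pc ∈ (A.coinList h w.reverse q t).take (2 * (w.length - j))) :
    ∃ k, j < k ∧ k ≤ w.length ∧ pc.1.1 = (A.derivRun w q).getD k A.qI ∧
      pc.1.2.1 = w.take k := by
  obtain ⟨k, hkj, hk, hstate, hword⟩ := mem_take_coinList A h _ q t _ pc hpc
  rw [List.length_reverse] at hk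
  refine ⟨w.length - k, by omega, by omega, ?_, ?_⟩
  · rw [hstate, derivRun_getD A (by omega), Nat.sub_sub_self hk.le]
  · rw [hword, List.drop_reverse, List.reverse_reverse]

theorem mem_coinList_reverse {w : List Bool} {q : σ} {t : ℚ} {pc}
    (hpc : pc ∈ A.coinList h w.reverse q t) :
    ∃ k, 0 < k ∧ k ≤ w.length ∧ pc.1.1 = (A.derivRun w q).getD k A.qI ∧
      pc.1.2.1 = w.take k := by
  rw [← List.take_of_length_le (length_coinList A h _ q t).le, List.length_reverse,
    ← Nat.sub_zero w.length] at hpc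
  exact mem_take_coinList_reverse A h hpc

theorem drop_coinList_reverse {w : List Bool} {j : ℕ} (hj : j < w.length) (q : σ) (t : ℚ) :
    (A.coinList h w.reverse q t).drop (2 * (w.length - j)) =
      A.coinList h (w.take j).reverse ((A.derivRun w q).getD j A.qI)
        (h ((A.derivRun w q).getD j A.qI)) := by
  rw [drop_coinList A h _ q t (by omega) (by simp), List.drop_reverse,
    Nat.sub_sub_self hj.le, ← derivRun_getD A hj.le]

theorem coinList_reverse_disjoint {w w' : List Bool} {q : σ} {t : ℚ}
    (hlen : w'.length = w.length) :
    ∀ pc ∈ A.coinList h w.reverse q t, ∀ pc' ∈ (A.coinList h w'.reverse q t).take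
      (2 * (w.length - lcpsLevel (A.derivRun w q) (A.derivRun w' q) w w')), pc.1 ≠ pc'.1 := by
  intro pc hpc pc' hpc' heq
  obtain ⟨k, -, hk, hstate, hword⟩ := mem_coinList_reverse A h hpc
  rw [← hlen] at hpc'
  obtain ⟨k', hLk', hk', hstate', hword'⟩ := mem_take_coinList_reverse A h hpc'
  have hwords : w.take k = w'.take k' := hword.symm.trans ((congrArg (·.2.1) heq).trans hword')
  obtain rfl : k = k' := by
    simpa [hk, hk'] using congrArg List.length hwords
  exact derivRun_getD_ne_of_lcpsLevel_lt A hlen hLk' hk hwords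
    (hstate.symm.trans ((congrArg (·.1) heq).trans hstate'))

theorem measure_coinList_inter {Ω : Type*} [MeasurableSpace Ω] {μ : Measure Ω}
    {U : σ × List Bool × Bool → Ω → ℝ} (hindep : iIndepFun U μ)
    (hunif : ∀ i c, 0 ≤ c → c ≤ 1 → μ {ω | U i ω ≤ c} = ENNReal.ofReal c)
    (hpos : ∀ p, 0 < h p) (hI : h A.qI = 1)
    (hle : ∀ v p, A.Accepts v p → v ≠ [] → h p ≤ A.rhoH h p)
    {q : σ} {t : ℚ} (ht0 : 0 ≤ t) (htle : t ≤ A.rhoH h q)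
    {w w' : List Bool} (hw : A.Accepts w q) (hw' : A.Accepts w' q)
    (hlen : w'.length = w.length) (hne : w ≠ w') {m : ℕ} (hm : m ≤ 1) :
    μ ({ω | ∀ pc ∈ (A.coinList h w.reverse q t).drop m, U pc.1 ω ≤ pc.2} ∩
        {ω | ∀ pc ∈ (A.coinList h w'.reverse q t).drop m, U pc.1 ω ≤ pc.2}) =
      ENNReal.ofReal ((((A.coinList h w.reverse q t).drop m).map Prod.snd).prod *
        (((A.coinList h w'.reverse q t).drop m).map Prod.snd).prod /
        h ((A.derivRun w q).getD (lcpsLevel (A.derivRun w q) (A.derivRun w' q) w w') A.qI)) := by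
  have h0 : (A.derivRun w q).take 1 = (A.derivRun w' q).take 1 := by
    rw [take_one_derivRun A hw, take_one_derivRun A hw']
  set L := lcpsLevel (A.derivRun w q) (A.derivRun w' q) w w'
  have hL : L < w.length := lcpsLevel_lt_length h0 hlen hne
  obtain ⟨hRL, hwL⟩ := take_lcpsLevel (w := w) (w' := w') h0
  set s := (A.derivRun w q).getD L A.qI
  have hdrop' : (A.coinList h w'.reverse q t).drop (2 * (w.length - L)) =
      A.coinList h (w.take L).reverse s (h s) := by
    rw [← hlen, drop_coinList_reverse A h (hlen ▸ hL), ← hwL,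
      ← List.getD_eq_getD_of_take_eq _ hRL]
  have hprodC : ((A.coinList h (w.take L).reverse s (h s)).map Prod.snd).prod = h s := by
    refine prod_coinList A h hpos hI _ _ _ ?_ fun _ => rfl
    rw [List.reverse_reverse]
    exact accepts_derivRun_getD A hw hL.le
  have hbounds := coinList_bounds A h hpos hle
  rw [← hprodC, ← hdrop']
  refine measure_inter_eq_of_drop_eq hindep hunif (by omega)
    ((drop_coinList_reverse A h hL q t).trans hdrop'.symm) ?_ ?_ ?_
  · rw [List.map_append, List.nodup_append]
    refine ⟨nodup_coinList A h _ q t,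
      (nodup_coinList A h _ q t).sublist ((List.take_sublist _ _).map _), ?_⟩
    simp only [List.mem_map]
    rintro _ ⟨pc, hpc, rfl⟩ _ ⟨pc', hpc', rfl⟩
    exact coinList_reverse_disjoint A h hlen pc hpc pc' hpc'
  · intro pc hpc
    rcases List.mem_append.1 hpc with hpc | hpc
    · exact hbounds _ q t (by simpa using hw) ht0 htle pc hpc
    · exact hbounds _ q t (by simpa using hw') ht0 htle pc hpc
  · rw [hdrop', hprodC]
    exact_mod_cast (hpos s).ne'

end UNFA

theorem stmt_4_general {σ Ω : Type*} [Fintype σ] [LinearOrder σ] [MeasurableSpace Ω]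
    (μ : Measure Ω) (A : UNFA σ)
    (lvl : σ → ℕ) (hlvl0 : lvl A.qI = 0)
    (hlvlstep : ∀ q' b q, A.trans q' b q → lvl q = lvl q' + 1)
    (U : σ × List Bool × Bool → Ω → ℝ)
    (hUindep : iIndepFun U μ)
    (hUunif : ∀ i c, 0 ≤ c → c ≤ 1 → μ {ω | U i ω ≤ c} = ENNReal.ofReal c)
    (h : σ → ℚ) (hpos : ∀ q', 0 < h q') (hI : h A.qI = 1)
    (hle : ∀ q', q' ≠ A.qI → h q' ≤ A.rhoH h q')
    (q : σ) (t : ℚ) (ht0 : 0 < t) (htle : t ≤ A.rhoH h q)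
    (w w' : List Bool) (hw : A.Accepts w q) (hw' : A.Accepts w' q) (hne : w ≠ w') :
    μ ({ω | A.memY U h w q t ω} ∩ {ω | A.memY U h w' q t ω}) ≤
      ENNReal.ofReal ((t : ℝ)^2 /
        ((h ((A.derivRun w q).getD
          (lcpsLevel (A.derivRun w q) (A.derivRun w' q) w w') A.qI) : ℝ))) ∧
    μ ({ω | A.memZ U h w q ω} ∩ {ω | A.memZ U h w' q ω}) ≤
      ENNReal.ofReal ((A.rhoH h q : ℝ)^2 /
        ((h ((A.derivRun w q).getD
          (lcpsLevel (A.derivRun w q) (A.derivRun w' q) w w') A.qI) : ℝ))) := by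
  have hlevel := fun {v p} (hv : A.Accepts v p) => hv.level_eq_length lvl hlvl0 hlvlstep
  have hlen : w'.length = w.length := (hlevel hw').symm.trans (hlevel hw)
  have hle' : ∀ v p, A.Accepts v p → v ≠ [] → h p ≤ A.rhoH h p := fun v p hv hv0 =>
    hle p fun hp => hv0 (List.eq_nil_of_length_eq_zero (by rw [← hlevel hv, hp, hlvl0]))
  have hw0 : w ≠ [] := by
    rintro rfl
    exact hne (List.eq_nil_of_length_eq_zero hlen).symm
  have hw'0 : w' ≠ [] := by
    rintro rfl
    exact hw0 (List.eq_nil_of_length_eq_zero hlen.symm)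
  have key := fun {m} (hm : m ≤ 1) => UNFA.measure_coinList_inter A h hUindep hUunif hpos hI
    hle' ht0.le htle hw hw' hlen hne hm
  have hY := key (Nat.zero_le 1)
  have hZ := key le_rfl
  simp only [List.drop_zero, List.drop_one] at hY hZ
  rw [UNFA.prod_coinList A h hpos hI _ q t (by simpa using hw) (by simp [hw0]),
    UNFA.prod_coinList A h hpos hI _ q t (by simpa using hw') (by simp [hw'0])] at hY
  rw [UNFA.prod_tail_coinList A h hpos hI (by simpa using hw) (by simpa using hw0),
    UNFA.prod_tail_coinList A h hpos hI (by simpa using hw') (by simpa using hw'0)] at hZ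
  rw [UNFA.setOf_memY_eq A h U hw, UNFA.setOf_memY_eq A h U hw', UNFA.setOf_memZ_eq A h U hw hw0 t,
    UNFA.setOf_memZ_eq A h U hw' hw'0 t, hY, hZ, sq, sq]
  exact ⟨le_rfl, le_rfl⟩

/-- Second-order probabilities in the random process: for distinct `w, w' ∈ L(q)` and
`t* = h(lcps(run(w,q), run(w',q)))`,
`Pr[w ∈ Y^r_{h,t}(q) ∧ w' ∈ Y^r_{h,t}(q)] ≤ t²/t*`, and with `ρ_h(q)` the minimum of `h`
over the predecessors of `q`, `Pr[w ∈ Z^r_h(q) ∧ w' ∈ Z^r_h(q)] ≤ ρ_h(q)²/t*`. -/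
theorem stmt_4 {σ Ω : Type*} [Fintype σ] [LinearOrder σ] [MeasurableSpace Ω]
    (μ : Measure Ω) [IsProbabilityMeasure μ] (A : UNFA σ)
    (lvl : σ → ℕ) (hlvl0 : lvl A.qI = 0)
    (hlvlstep : ∀ q' b q, A.trans q' b q → lvl q = lvl q' + 1)
    (U : σ × List Bool × Bool → Ω → ℝ)
    (hUm : ∀ i, Measurable (U i))
    (hUindep : iIndepFun U μ)
    (hUunif : ∀ i c, 0 ≤ c → c ≤ 1 → μ {ω | U i ω ≤ c} = ENNReal.ofReal c)
    (h : σ → ℚ) (hpos : ∀ q', 0 < h q') (hI : h A.qI = 1)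
    (hle : ∀ q', q' ≠ A.qI → h q' ≤ A.rhoH h q')
    (q : σ) (t : ℚ) (ht0 : 0 < t) (htle : t ≤ A.rhoH h q) (htI : q = A.qI → t = 1)
    (w w' : List Bool) (hw : A.Accepts w q) (hw' : A.Accepts w' q) (hne : w ≠ w') :
    μ ({ω | A.memY U h w q t ω} ∩ {ω | A.memY U h w' q t ω}) ≤
      ENNReal.ofReal ((t : ℝ)^2 /
        ((h ((A.derivRun w q).getD
          (lcpsLevel (A.derivRun w q) (A.derivRun w' q) w w') A.qI) : ℝ))) ∧
    μ ({ω | A.memZ U h w q ω} ∩ {ω | A.memZ U h w' q ω}) ≤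
      ENNReal.ofReal ((A.rhoH h q : ℝ)^2 /
        ((h ((A.derivRun w q).getD
          (lcpsLevel (A.derivRun w q) (A.derivRun w' q) w w') A.qI) : ℝ))) :=
  stmt_4_general μ A lvl hlvl0 hlvlstep U hUindep hUunif h hpos hI hle q t ht0 htle w w' hw hw' hne
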